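/- arXiv:1510.00600 — 4 statements merged into one kernel-verified Lean document; each statement's English description precedes it below -/
import Mathlib

section
/- For all integers a ≥ 2 and b ≥ 2, √(2^a − 1) + (b−1)·√(2^(a−1) − 1) ≤ √(2^a − 1)·√(2^b − 1). -/
lemma aux_sq (b : ℤ) (hb : 2 ≤ b) :
    (Real.sqrt 2 + (b : ℝ) - 1) ^ 2 ≤ 2 * ((2 : ℝ) ^ b - 1) := by
  obtain ⟨n, rfl⟩ : ∃ n : ℕ, b = 2 + n := ⟨(b - 2).toNat, by omega⟩
  clear hb
  have h2 : Real.sqrt 2 ^ 2 = 2 := Real.sq_sqrt (by norm_num)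
  have hs : (0:ℝ) ≤ Real.sqrt 2 := Real.sqrt_nonneg 2
  induction n with
  | zero =>
      have hle : Real.sqrt 2 ≤ 3/2 := by nlinarith
      push_cast
      norm_num
      nlinarith
  | succ n ih =>
      have h1 : (2:ℝ) ^ (2 + (n:ℤ) + 1) = 2 ^ (2 + (n:ℤ)) * 2 :=
        zpow_add_one₀ (by norm_num) _
      have hstep : (2:ℤ) + (n + 1 : ℕ) = 2 + (n:ℤ) + 1 := by push_cast; ring
      rw [hstep, h1]
      push_cast at ih ⊢
      nlinarith [sq_nonneg (Real.sqrt 2 + (n:ℝ))]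

theorem stmt_5 (a b : ℤ) (ha : 2 ≤ a) (hb : 2 ≤ b) :
    Real.sqrt ((2 : ℝ) ^ a - 1) + ((b : ℝ) - 1) * Real.sqrt ((2 : ℝ) ^ (a - 1) - 1) ≤
      Real.sqrt ((2 : ℝ) ^ a - 1) * Real.sqrt ((2 : ℝ) ^ b - 1) := by
  set s := Real.sqrt 2 with hsdef
  have hs0 : (0:ℝ) < s := Real.sqrt_pos.mpr (by norm_num)
  have hs2 : s ^ 2 = 2 := Real.sq_sqrt (by norm_num)
  set A := Real.sqrt ((2:ℝ) ^ a - 1) with hA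
  set A' := Real.sqrt ((2:ℝ) ^ (a-1) - 1) with hA'
  set B := Real.sqrt ((2:ℝ) ^ b - 1) with hB
  have hA0 : 0 ≤ A := Real.sqrt_nonneg _
  have hA'0 : 0 ≤ A' := Real.sqrt_nonneg _
  -- s * A' ≤ A
  have hpow : (2:ℝ) ^ a = 2 ^ (a-1) * 2 := by
    rw [← zpow_add_one₀ (by norm_num : (2:ℝ) ≠ 0)]; ring_nf
  have h1 : s * A' ≤ A := by
    have : 2 * ((2:ℝ) ^ (a-1) - 1) ≤ (2:ℝ) ^ a - 1 := by rw [hpow]; ring_nf; linarith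
    calc s * A' = Real.sqrt (2 * ((2:ℝ) ^ (a-1) - 1)) := (Real.sqrt_mul (by norm_num) _).symm
      _ ≤ A := Real.sqrt_le_sqrt this
  -- s + (b-1) ≤ s * B
  have h2 : s + ((b:ℝ) - 1) ≤ s * B := by
    have hb1 : (1:ℝ) ≤ (b:ℝ) - 1 := by
      have : (2:ℝ) ≤ (b:ℝ) := by exact_mod_cast hb
      linarith
    have hnn : 0 ≤ s + (b:ℝ) - 1 := by linarith
    have := aux_sq b hb
    have hle : s + ((b:ℝ) - 1) ≤ Real.sqrt (2 * ((2:ℝ) ^ b - 1)) := by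
      rw [show s + ((b:ℝ)-1) = s + (b:ℝ) - 1 by ring]
      exact (Real.le_sqrt hnn ((sq_nonneg _).trans this)).mpr this
    calc s + ((b:ℝ) - 1) ≤ Real.sqrt (2 * ((2:ℝ) ^ b - 1)) := hle
      _ = s * B := Real.sqrt_mul (by norm_num) _
  have hb1 : (0:ℝ) ≤ (b:ℝ) - 1 := by
    have : (2:ℝ) ≤ (b:ℝ) := by exact_mod_cast hb
    linarith
  have h3 : ((b:ℝ)-1) * (s * A') ≤ ((b:ℝ)-1) * A := by
    exact mul_le_mul_of_nonneg_left h1 hb1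
  have h4 : A * (s + ((b:ℝ)-1)) ≤ A * (s * B) := mul_le_mul_of_nonneg_left h2 hA0
  nlinarith [h3, h4, hs0, hA0, hA'0]
end

section
/- Define B(a_1,…,a_n) = Σ over b ∈ Fib(n+1) of Π_{i=1}^{n} (a_i − 1)^{1−|b_{i+1}−b_i|}, where Fib(n+1) is the set of binary sequences of length n+1 with no two adjacent 1's. Then for n ≥ 2, B(a_1,…,a_n) = B(a_1,…,a_{n−1}) + (a_n − 1)·B(a_1,…,a_{n−1} − 1), where B(a_1,…,a_{n−1}−1) is interpreted as B(a_1,…,a_{n−2}) when a_{n−1} = 2 and n > 2. -/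
/-- The set of binary sequences of length `n+1` with no two adjacent 1's. -/
def fibSeqs (n : ℕ) : Finset (Fin (n + 1) → Bool) :=
  Finset.univ.filter fun b => ∀ i : Fin n, ¬(b i.castSucc = true ∧ b i.succ = true)

/-- `B n a = Σ_{b ∈ Fib(n+1)} Π_{i=1}^{n} (a_i - 1)^{1 - |b_{i+1} - b_i|}`. -/
def B (n : ℕ) (a : ℕ → ℤ) : ℤ :=
  ∑ b ∈ fibSeqs n, ∏ i : Fin n,
    (a i - 1) ^
      (1 - ((if b i.succ then (1 : ℤ) else 0) - (if b i.castSucc then (1 : ℤ) else 0)).natAbs)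

def wt (a : ℕ → ℤ) {k : ℕ} (b : Fin (k + 1) → Bool) : ℤ :=
  ∏ i : Fin k, (if b i.castSucc = b i.succ then a i - 1 else 1)

lemma B_eq (n : ℕ) (a : ℕ → ℤ) : B n a = ∑ b ∈ fibSeqs n, wt a b := by
  unfold B wt
  refine Finset.sum_congr rfl fun b _ => Finset.prod_congr rfl fun i _ => ?_
  cases h1 : b i.castSucc <;> cases h2 : b i.succ <;> simp [h1, h2]

lemma mem_fib {n : ℕ} {b : Fin (n + 1) → Bool} :
    b ∈ fibSeqs n ↔ ∀ i : Fin n, ¬(b i.castSucc = true ∧ b i.succ = true) := by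
  simp [fibSeqs]

lemma snoc_mem {n : ℕ} {c : Fin (n + 1) → Bool} {t : Bool} :
    Fin.snoc c t ∈ fibSeqs (n + 1) ↔
      c ∈ fibSeqs n ∧ ¬(c (Fin.last n) = true ∧ t = true) := by
  simp only [mem_fib]
  constructor
  · intro h
    refine ⟨fun j => ?_, ?_⟩
    · have := h j.castSucc
      rwa [Fin.succ_castSucc, Fin.snoc_castSucc, Fin.snoc_castSucc] at this
    · have := h (Fin.last n)
      rwa [Fin.succ_last, Fin.snoc_castSucc, Fin.snoc_last] at this
  · rintro ⟨h1, h2⟩ i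
    induction i using Fin.lastCases with
    | last => rwa [Fin.succ_last, Fin.snoc_castSucc, Fin.snoc_last]
    | cast j =>
        have := h1 j
        rwa [Fin.succ_castSucc, Fin.snoc_castSucc, Fin.snoc_castSucc]

lemma wt_snoc {k : ℕ} (a : ℕ → ℤ) (c : Fin (k + 1) → Bool) (t : Bool) :
    wt a (Fin.snoc c t) = wt a c * (if c (Fin.last k) = t then a k - 1 else 1) := by
  unfold wt
  rw [Fin.prod_univ_castSucc]
  congr 1
  · refine Finset.prod_congr rfl fun i _ => ?_
    rw [Fin.succ_castSucc, Fin.snoc_castSucc, Fin.snoc_castSucc, Fin.coe_castSucc]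
  · rw [Fin.succ_last, Fin.snoc_castSucc, Fin.snoc_last, Fin.val_last]

lemma sum_fib_false (n : ℕ) (F : (Fin (n + 2) → Bool) → ℤ) :
    ∑ b ∈ (fibSeqs (n + 1)).filter (fun b => b (Fin.last (n + 1)) = false), F b
      = ∑ c ∈ fibSeqs n, F (Fin.snoc c false) := by
  refine Finset.sum_nbij' (fun b => Fin.init b) (fun c => Fin.snoc c false) ?_ ?_ ?_ ?_ ?_
  · intro b hb
    rw [Finset.mem_filter] at hb
    obtain ⟨hb1, hb2⟩ := hb
    have : Fin.snoc (Fin.init b) (b (Fin.last (n+1))) ∈ fibSeqs (n+1) := by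
      rw [Fin.snoc_init_self]; exact hb1
    rw [hb2] at this
    exact (snoc_mem.mp this).1
  · intro c hc
    rw [Finset.mem_filter]
    constructor
    · exact snoc_mem.mpr ⟨hc, by simp⟩
    · simp [Fin.snoc_last]
  · intro b hb
    rw [Finset.mem_filter] at hb
    rw [← hb.2]
    exact Fin.snoc_init_self b
  · intro c hc
    simp
  · intro b hb
    rw [Finset.mem_filter] at hb
    rw [← hb.2, Fin.snoc_init_self]

lemma sum_fib_true (n : ℕ) (F : (Fin (n + 2) → Bool) → ℤ) :
    ∑ b ∈ (fibSeqs (n + 1)).filter (fun b => ¬ b (Fin.last (n + 1)) = false), F b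
      = ∑ c ∈ (fibSeqs n).filter (fun c => c (Fin.last n) = false), F (Fin.snoc c true) := by
  refine Finset.sum_nbij' (fun b => Fin.init b) (fun c => Fin.snoc c true) ?_ ?_ ?_ ?_ ?_
  · intro b hb
    rw [Finset.mem_filter] at hb
    obtain ⟨hb1, hb2⟩ := hb
    rw [Bool.not_eq_false] at hb2
    have : Fin.snoc (Fin.init b) (b (Fin.last (n+1))) ∈ fibSeqs (n+1) := by
      rw [Fin.snoc_init_self]; exact hb1
    rw [hb2] at this
    have h := snoc_mem.mp this
    rw [Finset.mem_filter]
    refine ⟨h.1, ?_⟩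
    simpa using h.2
  · intro c hc
    rw [Finset.mem_filter] at hc ⊢
    constructor
    · exact snoc_mem.mpr ⟨hc.1, by simp [hc.2]⟩
    · simp [Fin.snoc_last]
  · intro b hb
    rw [Finset.mem_filter, Bool.not_eq_false] at hb
    rw [← hb.2]
    exact Fin.snoc_init_self b
  · intro c hc
    simp
  · intro b hb
    rw [Finset.mem_filter, Bool.not_eq_false] at hb
    rw [← hb.2, Fin.snoc_init_self]

lemma sum_fib (n : ℕ) (F : (Fin (n + 2) → Bool) → ℤ) :
    ∑ b ∈ fibSeqs (n + 1), F b
      = ∑ c ∈ fibSeqs n, F (Fin.snoc c false)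
        + ∑ c ∈ (fibSeqs n).filter (fun c => c (Fin.last n) = false), F (Fin.snoc c true) := by
  rw [← Finset.sum_filter_add_sum_filter_not (fibSeqs (n + 1))
    (fun b => b (Fin.last (n + 1)) = false), sum_fib_false, sum_fib_true]

lemma wt_update {m : ℕ} (a : ℕ → ℤ) (v : ℤ) (d : Fin (m + 1) → Bool) :
    wt (Function.update a m v) d = wt a d := by
  unfold wt
  refine Finset.prod_congr rfl fun i _ => ?_
  rw [Function.update_of_ne (Nat.ne_of_lt i.isLt)]

lemma sum_if_last (k : ℕ) (a : ℕ → ℤ) (z w : ℤ) :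
    ∑ c ∈ fibSeqs k, wt a c * (if c (Fin.last k) = false then z else w)
      = (∑ c ∈ (fibSeqs k).filter (fun c => c (Fin.last k) = false), wt a c) * z
        + (∑ c ∈ (fibSeqs k).filter (fun c => ¬ c (Fin.last k) = false), wt a c) * w := by
  rw [← Finset.sum_filter_add_sum_filter_not (fibSeqs k) (fun c => c (Fin.last k) = false)]
  congr 1
  · rw [Finset.sum_mul]
    refine Finset.sum_congr rfl fun d hd => ?_
    rw [Finset.mem_filter] at hd
    rw [if_pos hd.2]
  · rw [Finset.sum_mul]
    refine Finset.sum_congr rfl fun d hd => ?_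
    rw [Finset.mem_filter] at hd
    rw [if_neg hd.2]

lemma sum_s0_true (k : ℕ) (a : ℕ → ℤ) (z : ℤ) :
    ∑ c ∈ (fibSeqs k).filter (fun c => c (Fin.last k) = false),
        wt a c * (if c (Fin.last k) = true then z else 1)
      = ∑ c ∈ (fibSeqs k).filter (fun c => c (Fin.last k) = false), wt a c := by
  refine Finset.sum_congr rfl fun d hd => ?_
  rw [Finset.mem_filter] at hd
  rw [if_neg (by simp [hd.2]), mul_one]

lemma sum_split (k : ℕ) (a : ℕ → ℤ) :
    ∑ c ∈ fibSeqs k, wt a c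
      = (∑ c ∈ (fibSeqs k).filter (fun c => c (Fin.last k) = false), wt a c)
        + (∑ c ∈ (fibSeqs k).filter (fun c => ¬ c (Fin.last k) = false), wt a c) :=
  (Finset.sum_filter_add_sum_filter_not _ _ _).symm

lemma S_eq (m : ℕ) (a : ℕ → ℤ) :
    ∑ c ∈ (fibSeqs (m + 1)).filter (fun c => c (Fin.last (m + 1)) = false), wt a c
      = B (m + 1) (Function.update a m (a m - 1)) := by
  rw [sum_fib_false m (wt a), B_eq, sum_fib m (wt (Function.update a m (a m - 1)))]
  simp only [wt_snoc, wt_update, Function.update_self]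
  rw [sum_if_last, sum_if_last, sum_s0_true]
  ring

lemma B_step (m : ℕ) (a : ℕ → ℤ) :
    B (m + 2) a
      = B (m + 1) a + (a (m + 1) - 1) * B (m + 1) (Function.update a m (a m - 1)) := by
  rw [B_eq (m + 2), sum_fib (m + 1) (wt a), B_eq (m + 1), ← S_eq m a]
  simp only [wt_snoc]
  rw [sum_if_last, sum_s0_true, sum_split (m + 1) a]
  ring

lemma B_update (m : ℕ) (a : ℕ → ℤ) (h : a m = 2) :
    B (m + 1) (Function.update a m (a m - 1)) = B m a := by
  rw [B_eq (m + 1), B_eq m, sum_fib m (wt (Function.update a m (a m - 1)))]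
  simp only [wt_snoc, wt_update, Function.update_self, h]
  rw [sum_if_last m a (2 - 1 - 1) 1, sum_s0_true m a (2 - 1 - 1), sum_split m a]
  ring

theorem stmt_9 (n : ℕ) (hn : 2 ≤ n) (a : ℕ → ℤ)
    (h1 : 1 ≤ a 0) (h2 : ∀ i, 1 ≤ i → i < n → 2 ≤ a i) :
    B n a =
      if 2 < n ∧ a (n - 2) = 2 then
        B (n - 1) a + (a (n - 1) - 1) * B (n - 2) a
      else
        B (n - 1) a + (a (n - 1) - 1) * B (n - 1) (Function.update a (n - 2) (a (n - 2) - 1)) := by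
  obtain ⟨m, rfl⟩ : ∃ m, n = m + 2 := ⟨n - 2, by omega⟩
  simp only [show m + 2 - 1 = m + 1 from rfl, show m + 2 - 2 = m from rfl]
  split_ifs with h
  · rw [B_step, B_update m a h.2]
  · exact B_step m a
end

section
/- Define S(a_1,…,a_n) recursively by S(a_1) = a_1 + 1 and S(a_1,…,a_n) = S(a_1,…,a_{n−1}) + (a_n − 1)·S(a_1,…,a_{n−1} − 1) (with S(a_1,…,a_{n−1}−1) := S(a_1,…,a_{n−2}) when a_{n−1} = 2 and n > 2, and S(a_1 − 1) := a_1 when n = 2). Then for all a_1 ≥ 2 and a_i ≥ 2 (i ≥ 2), 4·Π_{i=1}^{n}(2^{a_i} − 1) ≥ (4/3)·S(a_1,…,a_n)^2. -/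
/-!
Write `F = S(a_1, …, a_n)`, `G = S(a_1, …, a_n - 1)` and `P = Π (2^{a_i} - 1)`. Appending `a`
turns `(F, G, P)` into `(F + (a-1) G, F + (a-2) G, (2^a - 1) P)`, and the three quadratic bounds
`F² ≤ 3P`, `FG ≤ 2P`, `3G² ≤ 4P` survive this step because the new quadratic monomials are
combinations of the old ones with nonnegative coefficients, the resulting polynomial factors
`(2a+1)²/3`, `(4a²-1)/3`, `(2a-1)²/3` being dominated by `2^a - 1 ≥ a² - a + 1` for `a ≥ 2`.
-/

/-- Number of bases of a snake `S(a_1, …, a_n)`, via the lattice-path recursion.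
The list is given in reverse order `[a_n, …, a_1]`. -/
def snakeBases : List ℤ → ℤ
  | [] => 1
  | [a] => a + 1
  | a :: b :: l =>
      snakeBases (b :: l) +
        (a - 1) * (if b = 2 ∧ l ≠ [] then snakeBases l else snakeBases ((b - 1) :: l))
termination_by l => l.length

abbrev decHead (l : List ℤ) : List ℤ := l.modifyHead (· - 1)

-- The `b = 2` branch of the definition agrees with the generic one: `snakeBases (1 :: l) = snakeBases l`.
theorem snakeBases_cons_cons (a b : ℤ) (l : List ℤ) :
    snakeBases (a :: b :: l) = snakeBases (b :: l) + (a - 1) * snakeBases ((b - 1) :: l) := by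
  rw [snakeBases]
  split_ifs with hb
  · obtain ⟨rfl, hl⟩ := hb
    obtain ⟨c, l', rfl⟩ := List.exists_cons_of_ne_nil hl
    rw [show (2 : ℤ) - 1 = 1 by norm_num, snakeBases.eq_3 1 c l']
    ring
  · rfl

theorem snakeBases_cons (a : ℤ) {l : List ℤ} (hl : l ≠ []) :
    snakeBases (a :: l) = snakeBases l + (a - 1) * snakeBases (decHead l) := by
  obtain ⟨b, l', rfl⟩ := List.exists_cons_of_ne_nil hl
  exact snakeBases_cons_cons a b l'

theorem snakeBases_decHead_cons (a : ℤ) {l : List ℤ} (hl : l ≠ []) :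
    snakeBases (decHead (a :: l)) = snakeBases l + (a - 2) * snakeBases (decHead l) := by
  rw [decHead, List.modifyHead_cons, snakeBases_cons _ hl]
  ring

def snakeWeight (l : List ℤ) : ℚ := (l.map fun x => (2 : ℚ) ^ x - 1).prod

theorem snakeWeight_cons (a : ℤ) (l : List ℤ) :
    snakeWeight (a :: l) = (2 ^ a - 1) * snakeWeight l := by
  simp [snakeWeight]

theorem sq_sub_add_two_le_two_zpow {a : ℤ} (ha : 2 ≤ a) : (a : ℚ) ^ 2 - a + 2 ≤ 2 ^ a := by
  induction a, ha using Int.leInduction with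
  | base => norm_num
  | succ a ha ih =>
    have ha' : (2 : ℚ) ≤ a := by exact_mod_cast ha
    rw [zpow_add_one₀ two_ne_zero]
    push_cast
    nlinarith

structure SnakeBound (F G P : ℚ) : Prop where
  fst_sq_le : F ^ 2 ≤ 3 * P
  mul_le : F * G ≤ 2 * P
  snd_sq_le : 3 * G ^ 2 ≤ 4 * P

theorem snakeBound_singleton {a : ℤ} (ha : 2 ≤ a) :
    SnakeBound (a + 1) a (2 ^ a - 1) := by
  have hc := sq_sub_add_two_le_two_zpow ha
  have ha' : (2 : ℚ) ≤ a := by exact_mod_cast ha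
  exact ⟨by nlinarith, by nlinarith, by nlinarith⟩

theorem SnakeBound.step {F G P : ℚ} (hB : SnakeBound F G P) {a : ℤ} (ha : 2 ≤ a) :
    SnakeBound (F + (a - 1) * G) (F + (a - 2) * G) ((2 ^ a - 1) * P) := by
  obtain ⟨hFF, hFG, hGG⟩ := hB
  have hc := sq_sub_add_two_le_two_zpow ha
  have ha' : (2 : ℚ) ≤ a := by exact_mod_cast ha
  have hP : 0 ≤ P := by nlinarith [sq_nonneg G]
  have hcP : (a : ℚ) ^ 2 - a + 1 ≤ 2 ^ a - 1 := by linarith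
  have hcomb : ∀ u v : ℚ, 0 ≤ u → 0 ≤ v →
      F ^ 2 + u * (F * G) + v * G ^ 2 ≤ (3 + 2 * u + 4 / 3 * v) * P := fun u v hu hv => by
    nlinarith [mul_le_mul_of_nonneg_left hFG hu, mul_le_mul_of_nonneg_left hGG hv]
  have hFF' := hcomb (2 * (a - 1)) ((a - 1) ^ 2) (by linarith) (sq_nonneg _)
  have hFG' := hcomb (2 * a - 3) ((a - 1) * (a - 2)) (by linarith) (by nlinarith)
  have hGG' := hcomb (2 * (a - 2)) ((a - 2) ^ 2) (by linarith) (sq_nonneg _)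
  refine ⟨?_, ?_, ?_⟩ <;> nlinarith [mul_le_mul_of_nonneg_right hcP hP]

theorem snakeBound_cons (a : ℤ) (l : List ℤ) (h : ∀ x ∈ a :: l, 2 ≤ x) :
    SnakeBound (snakeBases (a :: l)) (snakeBases (decHead (a :: l))) (snakeWeight (a :: l)) := by
  induction l generalizing a with
  | nil =>
    simpa [snakeBases, snakeWeight] using snakeBound_singleton (h a List.mem_cons_self)
  | cons b l ih =>
    have hl : b :: l ≠ [] := List.cons_ne_nil b l
    have hB := (ih b fun x hx => h x (List.mem_cons_of_mem a hx)).step (h a List.mem_cons_self)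
    rw [snakeBases_cons a hl, snakeBases_decHead_cons a hl, snakeWeight_cons]
    push_cast
    exact hB

theorem stmt_11 (l : List ℤ) (hne : l ≠ []) (h : ∀ x ∈ l, 2 ≤ x) :
    (4 : ℚ) * (l.map fun x => (2 : ℚ) ^ x - 1).prod ≥ 4 / 3 * (snakeBases l : ℚ) ^ 2 := by
  obtain ⟨a, t, rfl⟩ := List.exists_cons_of_ne_nil hne
  have hF := (snakeBound_cons a t h).fst_sq_le
  rw [snakeWeight] at hF
  linarith
end

section
/- Let M be a matroid without loops or coloops, and let e be an element of its ground set. If T(M\e;2,0)·T(M\e;0,2) ≥ (4/3)·T(M\e;1,1)^2 and T(M/e;2,0)·T(M/e;0,2) ≥ (4/3)·T(M/e;1,1)^2, then T(M;2,0)·T(M;0,2) ≥ (4/3)·T(M;1,1)^2. -/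
/-- The Tutte polynomial of a matroid given by its ground set `E` and
rank function `r`, evaluated at `(x, y)`. -/
def tutte {α : Type*} [DecidableEq α] (E : Finset α) (r : Finset α → ℕ) (x y : ℝ) : ℝ :=
  ∑ A ∈ E.powerset, (x - 1) ^ (r E - r A) * (y - 1) ^ (A.card - r A)

section aux

variable {α : Type*} [DecidableEq α]

lemma rank_mono (r : Finset α → ℕ)
    (hr1 : ∀ (A : Finset α) (a : α), r A ≤ r (insert a A) ∧ r (insert a A) ≤ r A + 1)
    {A B : Finset α} (h : A ⊆ B) : r A ≤ r B := by
  have key : ∀ s A : Finset α, r A ≤ r (A ∪ s) := by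
    intro s
    induction s using Finset.induction with
    | empty => simp
    | @insert a s ha ih =>
        intro A
        rw [Finset.union_insert]
        exact le_trans (ih A) (hr1 (A ∪ s) a).1
  calc r A ≤ r (A ∪ B) := key B A
    _ = r B := by rw [Finset.union_eq_right.mpr h]

lemma rank_card (r : Finset α → ℕ) (hr0 : r ∅ = 0)
    (hr1 : ∀ (A : Finset α) (a : α), r A ≤ r (insert a A) ∧ r (insert a A) ≤ r A + 1)
    (A : Finset α) : r A ≤ A.card := by
  induction A using Finset.induction with
  | empty => simp [hr0]
  | @insert a s ha ih =>
      have := (hr1 s a).2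
      have hc : (insert a s).card = s.card + 1 := Finset.card_insert_of_notMem ha
      omega

/-- Deletion–contraction for the subset-expansion of the Tutte polynomial. -/
lemma tutte_delcon (E : Finset α) (r : Finset α → ℕ) (x y : ℝ)
    (hr0 : r ∅ = 0)
    (hr1 : ∀ (A : Finset α) (a : α), r A ≤ r (insert a A) ∧ r (insert a A) ≤ r A + 1)
    (e : α) (he : e ∈ E)
    (hle : r {e} = 1)
    (hce : r (E.erase e) = r E) :
    tutte E r x y = tutte (E.erase e) r x y
      + tutte (E.erase e) (fun A => r (insert e A) - 1) x y := by
  set s := E.erase e with hs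
  have hes : e ∉ s := Finset.notMem_erase e E
  have hE : E = insert e s := (Finset.insert_erase he).symm
  have hone : ∀ A : Finset α, 1 ≤ r (insert e A) := by
    intro A
    calc 1 = r {e} := hle.symm
      _ ≤ r (insert e A) := rank_mono r hr1 (by simp [Finset.singleton_subset_iff])
  unfold tutte
  rw [hE, Finset.sum_powerset_insert hes]
  congr 1
  · apply Finset.sum_congr rfl
    intro A hA
    have h1 : r (insert e s) = r s := by rw [← hE, ← hce]
    rw [h1]
  · apply Finset.sum_congr rfl
    intro A hA
    have hA' : A ⊆ s := Finset.mem_powerset.mp hA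
    have heA : e ∉ A := fun h => hes (hA' h)
    have hcard : (insert e A).card = A.card + 1 := Finset.card_insert_of_notMem heA
    have h1 : r (insert e s) = r s := by rw [← hE, ← hce]
    have h2 : 1 ≤ r (insert e A) := hone A
    have h3 : 1 ≤ r (insert e s) := hone s
    have e1 : r (insert e s) - r (insert e A)
        = (r (insert e s) - 1) - (r (insert e A) - 1) := by omega
    have e2 : (insert e A).card - r (insert e A) = A.card - (r (insert e A) - 1) := by
      omega
    have e1' : r s - r (insert e A) = r s - 1 - (r (insert e A) - 1) := by omega
    simp only [e2, h1, e1']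

lemma tutte_nonneg (E : Finset α) : ∀ (r : Finset α → ℕ),
    r ∅ = 0 →
    (∀ (A : Finset α) (a : α), r A ≤ r (insert a A) ∧ r (insert a A) ≤ r A + 1) →
    (∀ A B : Finset α, r (A ∪ B) + r (A ∩ B) ≤ r A + r B) →
    0 ≤ tutte E r 2 0 ∧ 0 ≤ tutte E r 0 2 := by
  induction E using Finset.strongInduction with
  | _ E ih =>
    intro r hr0 hr1 hsub
    rcases E.eq_empty_or_nonempty with rfl | ⟨e, he⟩
    · constructor <;> · simp [tutte]
    · set s := E.erase e with hs
      have hss : s ⊂ E := Finset.erase_ssubset he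
      have hes : e ∉ s := Finset.notMem_erase e E
      have hE : E = insert e s := (Finset.insert_erase he).symm
      have hmono : ∀ {A B : Finset α}, A ⊆ B → r A ≤ r B :=
        fun h => rank_mono r hr1 h
      have hcardb := rank_card r hr0 hr1
      have hrsE : r s ≤ r E ∧ r E ≤ r s + 1 := by
        constructor
        · exact hmono (Finset.erase_subset e E)
        · rw [hE]; exact (hr1 s e).2
      by_cases hloop : r {e} = 0
      · -- e is a loop : tutte E r x y = y * tutte s r x y
        have key : ∀ A : Finset α, r (insert e A) = r A := by
          intro A
          have h1 := (hr1 A e).1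
          have h2 := hsub A {e}
          have hu : A ∪ {e} = insert e A := by
            rw [Finset.union_comm, ← Finset.insert_eq]
          rw [hu, hloop] at h2
          omega
        have hfac : ∀ x y : ℝ, tutte E r x y = y * tutte s r x y := by
          intro x y
          have hrE : r E = r s := by rw [hE, key]
          unfold tutte
          rw [hE, Finset.sum_powerset_insert hes]
          have h2 : ∑ A ∈ s.powerset,
              (x - 1) ^ (r (insert e s) - r (insert e A)) *
                (y - 1) ^ ((insert e A).card - r (insert e A))
              = (y - 1) * ∑ A ∈ s.powerset,
                  (x - 1) ^ (r s - r A) * (y - 1) ^ (A.card - r A) := by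
            rw [Finset.mul_sum]
            apply Finset.sum_congr rfl
            intro A hA
            have hA' : A ⊆ s := Finset.mem_powerset.mp hA
            have heA : e ∉ A := fun h => hes (hA' h)
            have hcard : (insert e A).card = A.card + 1 :=
              Finset.card_insert_of_notMem heA
            have hra : r A ≤ A.card := hcardb A
            rw [key, key, hcard]
            have : A.card + 1 - r A = (A.card - r A) + 1 := by omega
            rw [this, pow_succ]
            ring
          rw [h2, key]
          ring
        constructor
        · rw [hfac 2 0]; simp
        · rw [hfac 0 2]
          have := (ih s hss r hr0 hr1 hsub).2
          linarith
      · have hle : r {e} = 1 := by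
          have h1 := (hr1 ∅ e).2
          rw [hr0] at h1
          have : ({e} : Finset α) = insert e ∅ := by simp
          rw [this]
          rw [this] at hloop
          omega
        by_cases hcoloop : r s = r E
        · -- e is neither a loop nor a coloop : deletion-contraction
          set r' : Finset α → ℕ := fun A => r (insert e A) - 1 with hr'
          have hone : ∀ A : Finset α, 1 ≤ r (insert e A) := by
            intro A
            calc 1 = r {e} := hle.symm
              _ ≤ r (insert e A) := hmono (by simp [Finset.singleton_subset_iff])
          have hr'0 : r' ∅ = 0 := by
            have : insert e (∅ : Finset α) = {e} := by simp
            simp only [hr', this, hle]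
          have hr'1 : ∀ (A : Finset α) (a : α),
              r' A ≤ r' (insert a A) ∧ r' (insert a A) ≤ r' A + 1 := by
            intro A a
            have hc : insert e (insert a A) = insert a (insert e A) :=
              Finset.insert_comm e a A
            have h1 := (hr1 (insert e A) a).1
            have h2 := (hr1 (insert e A) a).2
            have h3 := hone A
            simp only [hr', hc]
            omega
          have hr'sub : ∀ A B : Finset α,
              r' (A ∪ B) + r' (A ∩ B) ≤ r' A + r' B := by
            intro A B
            have hu : insert e (A ∪ B) = insert e A ∪ insert e B := by
              ext x; simp only [Finset.mem_insert, Finset.mem_union]; tauto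
            have hi : insert e (A ∩ B) = insert e A ∩ insert e B := by
              ext x; simp only [Finset.mem_insert, Finset.mem_inter]; tauto
            have h := hsub (insert e A) (insert e B)
            rw [← hu, ← hi] at h
            have h1 := hone (A ∪ B)
            have h2 := hone (A ∩ B)
            have h3 := hone A
            have h4 := hone B
            simp only [hr']
            omega
          have hdc0 := tutte_delcon E r 2 0 hr0 hr1 e he hle hcoloop
          have hdc2 := tutte_delcon E r 0 2 hr0 hr1 e he hle hcoloop
          have hd := ih s hss r hr0 hr1 hsub
          have hc := ih s hss r' hr'0 hr'1 hr'sub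
          constructor
          · rw [hdc0]; exact add_nonneg hd.1 hc.1
          · rw [hdc2]; exact add_nonneg hd.2 hc.2
        · -- e is a coloop : tutte E r x y = x * tutte s r x y
          have hrE : r E = r s + 1 := by omega
          have key : ∀ A : Finset α, A ⊆ s → r (insert e A) = r A + 1 := by
            intro A hA
            have h := hsub (insert e A) s
            have hu : insert e A ∪ s = E := by
              rw [hE, Finset.insert_union, Finset.union_eq_right.mpr hA]
            have hi : insert e A ∩ s = A := by
              rw [Finset.insert_inter_of_notMem hes, Finset.inter_eq_left.mpr hA]
            rw [hu, hi] at h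
            have h2 := (hr1 A e).2
            omega
          have hfac : ∀ x y : ℝ, tutte E r x y = x * tutte s r x y := by
            intro x y
            unfold tutte
            rw [hE, Finset.sum_powerset_insert hes]
            have hrEs : r (insert e s) = r s + 1 := by rw [← hE]; exact hrE
            have h1 : ∑ A ∈ s.powerset,
                (x - 1) ^ (r (insert e s) - r A) * (y - 1) ^ (A.card - r A)
                = (x - 1) * ∑ A ∈ s.powerset,
                    (x - 1) ^ (r s - r A) * (y - 1) ^ (A.card - r A) := by
              rw [Finset.mul_sum]
              apply Finset.sum_congr rfl
              intro A hA
              have hA' : A ⊆ s := Finset.mem_powerset.mp hA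
              have hra : r A ≤ r s := hmono hA'
              rw [hrEs]
              have : r s + 1 - r A = (r s - r A) + 1 := by omega
              rw [this, pow_succ]
              ring
            have h2 : ∑ A ∈ s.powerset,
                (x - 1) ^ (r (insert e s) - r (insert e A)) *
                  (y - 1) ^ ((insert e A).card - r (insert e A))
                = ∑ A ∈ s.powerset,
                    (x - 1) ^ (r s - r A) * (y - 1) ^ (A.card - r A) := by
              apply Finset.sum_congr rfl
              intro A hA
              have hA' : A ⊆ s := Finset.mem_powerset.mp hA
              have heA : e ∉ A := fun h => hes (hA' h)
              have hcard : (insert e A).card = A.card + 1 :=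
                Finset.card_insert_of_notMem heA
              rw [key A hA', hrEs, hcard]
              congr 1 <;> congr 1 <;> omega
            rw [h1, h2]
            ring
          constructor
          · rw [hfac 2 0]
            have := (ih s hss r hr0 hr1 hsub).1
            linarith
          · rw [hfac 0 2]; simp
  
lemma tutte_one_one_nonneg (E : Finset α) (r : Finset α → ℕ) :
    0 ≤ tutte E r 1 1 := by
  apply Finset.sum_nonneg
  intro A hA
  have h1 : (0:ℝ) ≤ (1 - 1 : ℝ) ^ (r E - r A) := by norm_num
  have h2 : (0:ℝ) ≤ (1 - 1 : ℝ) ^ (A.card - r A) := by norm_num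
  exact mul_nonneg h1 h2

lemma ineq_combine {a b a' b' c c' : ℝ} (ha : 0 ≤ a) (hb : 0 ≤ b)
    (ha' : 0 ≤ a') (hb' : 0 ≤ b') (hc : 0 ≤ c) (hc' : 0 ≤ c')
    (h1 : 4 / 3 * c ^ 2 ≤ a * b) (h2 : 4 / 3 * c' ^ 2 ≤ a' * b') :
    4 / 3 * (c + c') ^ 2 ≤ (a + a') * (b + b') := by
  have h3 : (4 / 3 * c ^ 2) * (4 / 3 * c' ^ 2) ≤ (a * b) * (a' * b') := by
    apply mul_le_mul h1 h2 (by positivity) (by positivity)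
  have h4 : 0 ≤ a * b' := mul_nonneg ha hb'
  have h5 : 0 ≤ a' * b := mul_nonneg ha' hb
  have h6 : 8 / 3 * (c * c') ≤ a * b' + a' * b := by
    nlinarith [sq_nonneg (a * b' - a' * b), sq_nonneg (a * b' + a' * b - 8/3 * (c * c')),
      mul_nonneg hc hc', mul_nonneg (mul_nonneg hc hc') (mul_nonneg hc hc')]
  nlinarith [h1, h2, h6]

end aux

theorem stmt_15 {α : Type*} [DecidableEq α] (E : Finset α) (r : Finset α → ℕ)
    -- rank axioms
    (hr0 : r ∅ = 0)
    (hr1 : ∀ (A : Finset α) (a : α), r A ≤ r (insert a A) ∧ r (insert a A) ≤ r A + 1)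
    (hsub : ∀ A B : Finset α, r (A ∪ B) + r (A ∩ B) ≤ r A + r B)
    -- no loops and no coloops
    (hloop : ∀ a ∈ E, r {a} = 1)
    (hcoloop : ∀ a ∈ E, r (E.erase a) = r E)
    (e : α) (he : e ∈ E)
    -- the inequality for the deletion M \ e
    (hdel : tutte (E.erase e) r 2 0 * tutte (E.erase e) r 0 2 ≥
      4 / 3 * (tutte (E.erase e) r 1 1) ^ 2)
    -- the inequality for the contraction M / e
    (hcon : tutte (E.erase e) (fun A => r (insert e A) - 1) 2 0 *
        tutte (E.erase e) (fun A => r (insert e A) - 1) 0 2 ≥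
      4 / 3 * (tutte (E.erase e) (fun A => r (insert e A) - 1) 1 1) ^ 2) :
    tutte E r 2 0 * tutte E r 0 2 ≥ 4 / 3 * (tutte E r 1 1) ^ 2 := by
  have hle : r {e} = 1 := hloop e he
  have hce : r (E.erase e) = r E := hcoloop e he
  have hdc20 := tutte_delcon E r 2 0 hr0 hr1 e he hle hce
  have hdc02 := tutte_delcon E r 0 2 hr0 hr1 e he hle hce
  have hdc11 := tutte_delcon E r 1 1 hr0 hr1 e he hle hce
  -- contracted rank function satisfies the axioms
  set r' : Finset α → ℕ := fun A => r (insert e A) - 1 with hr'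
  have hmono : ∀ {A B : Finset α}, A ⊆ B → r A ≤ r B :=
    fun h => rank_mono r hr1 h
  have hone : ∀ A : Finset α, 1 ≤ r (insert e A) := by
    intro A
    calc 1 = r {e} := hle.symm
      _ ≤ r (insert e A) := hmono (by simp [Finset.singleton_subset_iff])
  have hr'0 : r' ∅ = 0 := by
    have : insert e (∅ : Finset α) = {e} := by simp
    simp only [hr', this, hle]
  have hr'1 : ∀ (A : Finset α) (a : α),
      r' A ≤ r' (insert a A) ∧ r' (insert a A) ≤ r' A + 1 := by
    intro A a
    have hc : insert e (insert a A) = insert a (insert e A) := Finset.insert_comm e a A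
    have h1 := (hr1 (insert e A) a).1
    have h2 := (hr1 (insert e A) a).2
    have h3 := hone A
    simp only [hr', hc]
    omega
  have hr'sub : ∀ A B : Finset α, r' (A ∪ B) + r' (A ∩ B) ≤ r' A + r' B := by
    intro A B
    have hu : insert e (A ∪ B) = insert e A ∪ insert e B := by
      ext x; simp only [Finset.mem_insert, Finset.mem_union]; tauto
    have hi : insert e (A ∩ B) = insert e A ∩ insert e B := by
      ext x; simp only [Finset.mem_insert, Finset.mem_inter]; tauto
    have h := hsub (insert e A) (insert e B)
    rw [← hu, ← hi] at h
    have h1 := hone (A ∪ B)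
    have h2 := hone (A ∩ B)
    have h3 := hone A
    have h4 := hone B
    simp only [hr']
    omega
  have hd := tutte_nonneg (E.erase e) r hr0 hr1 hsub
  have hc := tutte_nonneg (E.erase e) r' hr'0 hr'1 hr'sub
  have h11d := tutte_one_one_nonneg (E.erase e) r
  have h11c := tutte_one_one_nonneg (E.erase e) r'
  rw [hdc20, hdc02, hdc11]
  exact ineq_combine hd.1 hd.2 hc.1 hc.2 h11d h11c hdel hcon
end
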